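/- Let N₁,…,N_n be independent real random variables, each symmetric about zero with no atom at 0, and let {α_{i,t}}, i = 1,…,m-1, t = 1,…,n, be i.i.d. random signs independent of the noise. Set α_{0,t} := 1. Fix measurable S : ℝ^n → ℝ^d. Then the random vectors S(α_{i,1}N₁, …, α_{i,n}N_n), i = 0,…,m-1, are exchangeable; in particular, conditionally on (|N₁|,…,|N_n|) they are i.i.d. -/

import Mathlib

open MeasureTheory ProbabilityTheory

/-- Rademacher distribution on ℝ: values ±1 with probability 1/2 each. -/
noncomputable def signMeasure : Measure ℝ :=
  (2:ENNReal)⁻¹ • Measure.dirac (1:ℝ) + (2:ENNReal)⁻¹ • Measure.dirac (-1:ℝ)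

/-!
Multiplying a whole column `t` — the noise `N t` and all the signs `α i t` — by `±1` leaves the
products `α i t * N t` unchanged, and by symmetry it preserves the joint law of the noise and
of the random signs. Conditionally on the value `e` of a row of random signs, flipping each column
`t` by `e t` turns that row into ones. Hence the products have the same law whether row `0` is
pinned to ones or is one more row of independent signs; in the latter model all rows are
i.i.d., so the law is invariant under permutations of the rows.
-/

open Set

instance : IsProbabilityMeasure signMeasure :=
  ⟨by simp [signMeasure, ENNReal.inv_two_add_inv_two]⟩

lemma map_neg_signMeasure : signMeasure.map Neg.neg = signMeasure := by
  rw [signMeasure, Measure.map_add _ _ measurable_neg, Measure.map_smul, Measure.map_smul,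
    Measure.map_dirac' measurable_neg, Measure.map_dirac' measurable_neg, neg_neg, add_comm]

lemma ae_signMeasure : ∀ᵐ x ∂signMeasure, x = 1 ∨ x = -1 := by
  rw [ae_iff, show {x : ℝ | ¬(x = 1 ∨ x = -1)} = {1, -1}ᶜ by ext; simp]
  simp [signMeasure, Measure.dirac_apply']

lemma measurePreserving_const_mul_of_map_neg {ν : Measure ℝ} (hν : ν.map Neg.neg = ν) {c : ℝ}
    (hc : c = 1 ∨ c = -1) : MeasurePreserving (c * ·) ν ν := by
  rcases hc with rfl | rfl
  · simp only [one_mul]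
    exact MeasurePreserving.id ν
  · simpa [neg_one_mul] using (⟨measurable_neg, hν⟩ : MeasurePreserving Neg.neg ν ν)

instance isProbabilityMeasure_sumElim {α β γ : Type*} [MeasurableSpace γ]
    (μ : α → Measure γ) (ν : β → Measure γ) [∀ a, IsProbabilityMeasure (μ a)]
    [∀ b, IsProbabilityMeasure (ν b)] (j : α ⊕ β) : IsProbabilityMeasure (Sum.elim μ ν j) := by
  cases j <;> dsimp only [Sum.elim_inl, Sum.elim_inr] <;> infer_instance

instance isProbabilityMeasure_piecewise {J : Type*} {X : J → Type*}
    [∀ j, MeasurableSpace (X j)] (s : Set J) [∀ j, Decidable (j ∈ s)] (μ ν : ∀ j, Measure (X j))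
    [∀ j, IsProbabilityMeasure (μ j)] [∀ j, IsProbabilityMeasure (ν j)] (j : J) :
    IsProbabilityMeasure (s.piecewise μ ν j) := by
  by_cases hj : j ∈ s
  · rw [s.piecewise_eq_of_mem _ _ hj]; infer_instance
  · rw [s.piecewise_eq_of_notMem _ _ hj]; infer_instance

lemma measurable_piecewise_prod {J : Type*} {X : J → Type*} [∀ j, MeasurableSpace (X j)]
    (s : Set J) [∀ j, Decidable (j ∈ s)] :
    Measurable fun z : (∀ j, X j) × (∀ j, X j) => s.piecewise z.1 z.2 := by
  refine measurable_pi_lambda _ fun j => ?_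
  by_cases hj : j ∈ s <;> simp only [s.piecewise_eq_of_mem, s.piecewise_eq_of_notMem, hj,
    not_false_eq_true] <;> fun_prop

namespace MeasureTheory.Measure

lemma map_piecewise_prod_pi {J : Type*} [Fintype J] {X : J → Type*}
    [∀ j, MeasurableSpace (X j)] (s : Set J) [∀ j, Decidable (j ∈ s)] (μ ν : ∀ j, Measure (X j))
    [∀ j, IsProbabilityMeasure (μ j)] [∀ j, IsProbabilityMeasure (ν j)] :
    ((Measure.pi μ).prod (Measure.pi ν)).map (fun z => s.piecewise z.1 z.2) =
      Measure.pi (s.piecewise μ ν) := by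
  refine (Measure.pi_eq fun t ht => ?_).symm
  have hpre : (fun z : (∀ j, X j) × (∀ j, X j) => s.piecewise z.1 z.2) ⁻¹' univ.pi t =
      univ.pi (s.piecewise t fun _ => univ) ×ˢ univ.pi (s.piecewise (fun _ => univ) t) := by
    ext z
    simp only [mem_preimage, mem_univ_pi, mem_prod, ← forall_and]
    refine forall_congr' fun j => ?_
    by_cases hj : j ∈ s <;> simp [hj]
  rw [Measure.map_apply (measurable_piecewise_prod s) (.univ_pi ht), hpre, Measure.prod_prod,
    Measure.pi_pi, Measure.pi_pi, ← Finset.prod_mul_distrib]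
  refine Finset.prod_congr rfl fun j _ => ?_
  by_cases hj : j ∈ s <;> simp [hj]

lemma map_prod_eq_of_ae_map_eq {A B Z : Type*} [MeasurableSpace A] [MeasurableSpace B]
    [MeasurableSpace Z] {μ : Measure A} [IsProbabilityMeasure μ] {ν : Measure B} [SFinite ν]
    {F : A × B → Z} (hF : Measurable F) {ρ : Measure Z}
    (h : ∀ᵐ a ∂μ, ν.map (fun b => F (a, b)) = ρ) :
    (μ.prod ν).map F = ρ := by
  ext s hs
  rw [Measure.map_apply hF hs, Measure.prod_apply (hF hs)]
  calc ∫⁻ a, ν (Prod.mk a ⁻¹' (F ⁻¹' s)) ∂μ = ∫⁻ _, ρ s ∂μ := by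
        refine lintegral_congr_ae (h.mono fun a ha => ?_)
        dsimp only
        rw [← ha]
        exact (Measure.map_apply (hF.comp measurable_prodMk_left) hs).symm
    _ = ρ s := by simp

end MeasureTheory.Measure

section RowProducts

variable {ι κ : Type*}

/-- Coordinate `Sum.inl t` holds the noise `N t` and coordinate `Sum.inr (i, t)` the sign
`α i t`; both lie in column `t`. -/
def rowProducts (x : ι ⊕ κ × ι → ℝ) (q : κ × ι) : ℝ :=
  x (.inr q) * x (.inl q.2)

lemma measurable_rowProducts : Measurable (rowProducts : (ι ⊕ κ × ι → ℝ) → κ × ι → ℝ) :=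
  measurable_pi_lambda _ fun _ => (measurable_pi_apply _).mul (measurable_pi_apply _)

def flipColumns (c : ι → ℝ) (x : ι ⊕ κ × ι → ℝ) (j : ι ⊕ κ × ι) : ℝ :=
  c (j.elim id Prod.snd) * x j

def pinnedRow (i₀ : κ) : Set (ι ⊕ κ × ι) :=
  {j | j.elim (fun _ => False) (fun q => q.1 = i₀)}

instance [DecidableEq κ] (i₀ : κ) : DecidablePred (· ∈ pinnedRow (ι := ι) i₀)
  | .inl _ => isFalse id
  | .inr q => inferInstanceAs (Decidable (q.1 = i₀))

@[simp] lemma inl_notMem_pinnedRow (i₀ : κ) (t : ι) : Sum.inl t ∉ pinnedRow i₀ := id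

@[simp] lemma inr_mem_pinnedRow {i₀ : κ} {q : κ × ι} :
    (Sum.inr q : ι ⊕ κ × ι) ∈ pinnedRow i₀ ↔ q.1 = i₀ := Iff.rfl

/-- Flipping each column by the sign found in row `i₀` moves that sign onto the noise, leaving
ones in row `i₀`. -/
lemma rowProducts_piecewise_pinnedRow [DecidableEq κ] (i₀ : κ) (e x : ι ⊕ κ × ι → ℝ)
    (he : ∀ t, e (.inr (i₀, t)) = 1 ∨ e (.inr (i₀, t)) = -1) :
    rowProducts ((pinnedRow i₀).piecewise e x) =
      rowProducts ((pinnedRow i₀).piecewise 1 (flipColumns (fun t => e (.inr (i₀, t))) x)) := by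
  funext ⟨i, t⟩
  by_cases hi : i = i₀
  · subst hi
    simp [rowProducts, flipColumns]
  · have hsq : e (.inr (i₀, t)) * e (.inr (i₀, t)) = 1 := by rcases he t with h | h <;> simp [h]
    simp only [rowProducts, flipColumns, Set.piecewise, inr_mem_pinnedRow, hi,
      inl_notMem_pinnedRow, if_false, Sum.elim_inl, Sum.elim_inr, id]
    linear_combination (-(x (.inr (i, t)) * x (.inl t))) * hsq

variable [Fintype ι] [Fintype κ]

noncomputable def signModel (μ : ι → Measure ℝ) : Measure (ι ⊕ κ × ι → ℝ) :=
  Measure.pi (Sum.elim μ fun _ => signMeasure)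

instance (μ : ι → Measure ℝ) [∀ t, IsProbabilityMeasure (μ t)] :
    IsProbabilityMeasure (signModel (κ := κ) μ) := by
  unfold signModel; infer_instance

lemma measurePreserving_signModel_permRows (μ : ι → Measure ℝ) [∀ t, IsProbabilityMeasure (μ t)]
    (σ : Equiv.Perm κ) :
    MeasurePreserving (fun (x : ι ⊕ κ × ι → ℝ) j =>
      x (Equiv.sumCongr (Equiv.refl ι) (σ.prodCongr (Equiv.refl ι)) j))
      (signModel μ) (signModel μ) := by
  unfold signModel
  convert measurePreserving_arrowCongr' (Sum.elim μ fun _ => signMeasure)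
    (Sum.elim μ fun _ => signMeasure)
    (Equiv.sumCongr (Equiv.refl ι) (σ.prodCongr (Equiv.refl ι))).symm
    (MeasurableEquiv.refl ℝ) ?_ using 1
  · ext x j
    simp [MeasurableEquiv.arrowCongr', Equiv.arrowCongr']
  · rintro (t | q) <;> exact MeasurePreserving.id _

lemma map_rowProducts_signModel_permRows (μ : ι → Measure ℝ) [∀ t, IsProbabilityMeasure (μ t)]
    (σ : Equiv.Perm κ) :
    ((signModel μ).map rowProducts).map (fun z (q : κ × ι) => z (σ q.1, q.2)) =
      (signModel μ).map rowProducts := by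
  have hσ := measurePreserving_signModel_permRows μ σ
  rw [Measure.map_map (measurable_pi_lambda _ fun _ => measurable_pi_apply _)
    measurable_rowProducts]
  conv_rhs => rw [← hσ.map_eq, Measure.map_map measurable_rowProducts hσ.measurable]
  rfl

variable {μ : ι → Measure ℝ} [∀ t, IsProbabilityMeasure (μ t)]

lemma measurePreserving_flipColumns (hμ : ∀ t, (μ t).map Neg.neg = μ t) {c : ι → ℝ}
    (hc : ∀ t, c t = 1 ∨ c t = -1) :
    MeasurePreserving (flipColumns (κ := κ) c) (signModel μ) (signModel μ) :=
  measurePreserving_pi _ _ fun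
    | .inl t => measurePreserving_const_mul_of_map_neg (hμ t) (hc t)
    | .inr q => measurePreserving_const_mul_of_map_neg map_neg_signMeasure (hc q.2)

variable [DecidableEq κ]

lemma map_rowProducts_piecewise_pinnedRow (hμ : ∀ t, (μ t).map Neg.neg = μ t) (i₀ : κ)
    (e : ι ⊕ κ × ι → ℝ) (he : ∀ t, e (.inr (i₀, t)) = 1 ∨ e (.inr (i₀, t)) = -1) :
    (signModel μ).map (fun x => rowProducts ((pinnedRow i₀).piecewise e x)) =
      (signModel μ).map (fun x => rowProducts ((pinnedRow i₀).piecewise 1 x)) := by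
  have hflip := measurePreserving_flipColumns (κ := κ) hμ he
  have hpin : Measurable fun x : ι ⊕ κ × ι → ℝ => rowProducts ((pinnedRow i₀).piecewise 1 x) :=
    measurable_rowProducts.comp ((measurable_piecewise_prod _).comp measurable_prodMk_left)
  simp_rw [rowProducts_piecewise_pinnedRow i₀ e _ he]
  conv_rhs => rw [← hflip.map_eq, Measure.map_map hpin hflip.measurable]
  rfl

noncomputable def pinnedModel (μ : ι → Measure ℝ) (i₀ : κ) : Measure (ι ⊕ κ × ι → ℝ) :=
  Measure.pi ((pinnedRow i₀).piecewise (fun _ => Measure.dirac 1)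
    (Sum.elim μ fun _ => signMeasure))

lemma map_rowProducts_piecewise_prod_signModel (hμ : ∀ t, (μ t).map Neg.neg = μ t) (i₀ : κ)
    (ν : ι ⊕ κ × ι → Measure ℝ) [∀ j, IsProbabilityMeasure (ν j)]
    (hν : ∀ t, ∀ᵐ y ∂ν (.inr (i₀, t)), y = 1 ∨ y = -1) :
    (((Measure.pi ν).prod (signModel μ)).map fun z => (pinnedRow i₀).piecewise z.1 z.2).map
        rowProducts =
      (signModel μ).map (fun x => rowProducts ((pinnedRow i₀).piecewise 1 x)) := by
  rw [Measure.map_map measurable_rowProducts (measurable_piecewise_prod _)]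
  refine Measure.map_prod_eq_of_ae_map_eq
    (measurable_rowProducts.comp (measurable_piecewise_prod _)) ?_
  have hrow : ∀ᵐ e ∂Measure.pi ν, ∀ t, e (.inr (i₀, t)) = 1 ∨ e (.inr (i₀, t)) = -1 :=
    ae_all_iff.2 fun t => Measure.tendsto_eval_ae_ae.eventually (hν t)
  exact hrow.mono fun e he => map_rowProducts_piecewise_pinnedRow hμ i₀ e he

theorem map_rowProducts_pinnedModel (hμ : ∀ t, (μ t).map Neg.neg = μ t) (i₀ : κ) :
    (pinnedModel μ i₀).map rowProducts = (signModel μ).map rowProducts := by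
  rw [pinnedModel, ← Measure.map_piecewise_prod_pi, ← signModel,
    map_rowProducts_piecewise_prod_signModel hμ i₀ _ fun t => by simp [ae_dirac_eq],
    ← map_rowProducts_piecewise_prod_signModel hμ i₀ (Sum.elim μ fun _ => signMeasure)
      fun t => ae_signMeasure,
    signModel, Measure.map_piecewise_prod_pi, Set.piecewise_same]

theorem map_rowProducts_permRows_eq {Ω Z : Type*} [MeasurableSpace Ω] [MeasurableSpace Z]
    {P : Measure Ω} {X : Ω → ι ⊕ κ × ι → ℝ} (hX : Measurable X)
    (hμ : ∀ t, (μ t).map Neg.neg = μ t) {i₀ : κ} (hlaw : P.map X = pinnedModel μ i₀)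
    (σ : Equiv.Perm κ) {G : (κ × ι → ℝ) → Z} (hG : Measurable G) :
    P.map (fun ω => G fun q => rowProducts (X ω) (σ q.1, q.2)) =
      P.map (fun ω => G (rowProducts (X ω))) := by
  have hperm : Measurable fun (z : κ × ι → ℝ) (q : κ × ι) => z (σ q.1, q.2) :=
    measurable_pi_lambda _ fun _ => measurable_pi_apply _
  have hexch := map_rowProducts_signModel_permRows μ σ
  rw [← map_rowProducts_pinnedModel hμ i₀, ← hlaw, Measure.map_map measurable_rowProducts hX,
    Measure.map_map hperm (measurable_rowProducts.comp hX)] at hexch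
  calc P.map (fun ω => G fun q => rowProducts (X ω) (σ q.1, q.2))
      = (P.map ((fun z q => z (σ q.1, q.2)) ∘ rowProducts ∘ X)).map G := by
        rw [Measure.map_map hG (hperm.comp (measurable_rowProducts.comp hX))]; rfl
    _ = P.map (fun ω => G (rowProducts (X ω))) := by
        rw [hexch, Measure.map_map hG (measurable_rowProducts.comp hX)]; rfl

end RowProducts

theorem stmt5_general {Ω : Type*} [MeasureSpace Ω] [IsProbabilityMeasure (ℙ : Measure Ω)]
    (n m d : ℕ) (hm : 0 < m)
    (N : Fin n → Ω → ℝ) (α : Fin m → Fin n → Ω → ℝ)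
    (hNmeas : ∀ t, Measurable (N t)) (hαmeas : ∀ i t, Measurable (α i t))
    (hα0 : ∀ t ω, α ⟨0, hm⟩ t ω = 1)
    (hαsign : ∀ i t, i ≠ ⟨0, hm⟩ → Measure.map (α i t) ℙ = signMeasure)
    (hNsym : ∀ t, Measure.map (N t) ℙ = Measure.map (fun ω => -N t ω) ℙ)
    (hindep : iIndepFun
      (Sum.elim (fun t => N t) (fun p : Fin m × Fin n => α p.1 p.2)) ℙ)
    (S : (Fin n → ℝ) → (Fin d → ℝ)) (hS : Measurable S) :
    ∀ σ : Equiv.Perm (Fin m),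
      Measure.map (fun ω (i : Fin m) => S (fun t => α i t ω * N t ω)) ℙ =
      Measure.map (fun ω (i : Fin m) => S (fun t => α (σ i) t ω * N t ω)) ℙ := by
  intro σ
  set f : Fin n ⊕ Fin m × Fin n → Ω → ℝ := Sum.elim (fun t => N t) (fun p => α p.1 p.2)
  have hf : ∀ j, Measurable (f j) := fun
    | .inl t => hNmeas t
    | .inr q => hαmeas q.1 q.2
  have hX : Measurable fun ω j => f j ω := measurable_pi_lambda _ hf
  have : ∀ t, IsProbabilityMeasure ((ℙ : Measure Ω).map (N t)) :=
    fun t => Measure.isProbabilityMeasure_map (hNmeas t).aemeasurable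
  have hμ : ∀ t, ((ℙ : Measure Ω).map (N t)).map Neg.neg = (ℙ : Measure Ω).map (N t) := fun t => by
    rw [Measure.map_map measurable_neg (hNmeas t), hNsym t]; rfl
  have hlaw : (ℙ : Measure Ω).map (fun ω j => f j ω) =
      pinnedModel (fun t => (ℙ : Measure Ω).map (N t)) ⟨0, hm⟩ := by
    rw [(iIndepFun_iff_map_fun_eq_pi_map fun j => (hf j).aemeasurable).1 hindep, pinnedModel]
    congr 1
    funext j
    rcases j with t | ⟨i, t⟩
    · rfl
    · by_cases hi : i = ⟨0, hm⟩
      · subst hi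
        simp [f, show α ⟨0, hm⟩ t = fun _ => 1 from funext (hα0 t)]
      · simp [f, hi, hαsign i t hi]
  have hF : Measurable fun (z : Fin m × Fin n → ℝ) (i : Fin m) => S fun t => z (i, t) :=
    measurable_pi_lambda _ fun i => hS.comp (measurable_pi_lambda _ fun t => measurable_pi_apply _)
  exact (map_rowProducts_permRows_eq hX hμ hlaw σ hF).symm

/-- With independent symmetric noises N₁,…,N_n (no atom at 0), i.i.d. random signs
α_{i,t} (i=1,…,m-1) independent of the noise, and α_{0,t} := 1, the random vectors
S(α_{i,1}N₁,…,α_{i,n}N_n), i = 0,…,m-1, are exchangeable. -/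
theorem stmt5 {Ω : Type*} [MeasureSpace Ω] [IsProbabilityMeasure (ℙ : Measure Ω)]
    (n m d : ℕ) (hm : 0 < m)
    (N : Fin n → Ω → ℝ) (α : Fin m → Fin n → Ω → ℝ)
    (hNmeas : ∀ t, Measurable (N t)) (hαmeas : ∀ i t, Measurable (α i t))
    (hα0 : ∀ t ω, α ⟨0, hm⟩ t ω = 1)
    (hαsign : ∀ i t, i ≠ ⟨0, hm⟩ → Measure.map (α i t) ℙ = signMeasure)
    (hNsym : ∀ t, Measure.map (N t) ℙ = Measure.map (fun ω => -N t ω) ℙ)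
    (hNnoatom : ∀ t, ℙ {ω | N t ω = 0} = 0)
    (hindep : iIndepFun
      (Sum.elim (fun t => N t) (fun p : Fin m × Fin n => α p.1 p.2)) ℙ)
    (S : (Fin n → ℝ) → (Fin d → ℝ)) (hS : Measurable S) :
    ∀ σ : Equiv.Perm (Fin m),
      Measure.map (fun ω (i : Fin m) => S (fun t => α i t ω * N t ω)) ℙ =
      Measure.map (fun ω (i : Fin m) => S (fun t => α (σ i) t ω * N t ω)) ℙ :=
  stmt5_general n m d hm N α hNmeas hαmeas hα0 hαsign hNsym hindep S hS
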